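/- Let ψ ∈ Ω be continuously differentiable on (0,∞) with ψ(t) = ∫₀^t ψ'(s) ds for all t ≥ 0. Then the following three conditions are equivalent: (i) there exists a > 1 such that liminf_{t→∞} ψ(at)/ψ(t) = 1; (ii) for every a > 1, liminf_{t→∞} ψ(at)/ψ(t) = 1; (iii) liminf_{t→∞} t·ψ'(t)/ψ(t) = 0. -/

import Mathlib

/-!
Write `g t = t ψ'(t) / ψ(t)`. Comparing the chord of the concave function `ψ` over `[t, a t]`
with its tangents at both ends gives
`1 + (1 - 1/a) g(a t) ≤ ψ(a t) / ψ(t) ≤ 1 + (a - 1) g(t)`,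
and the tangent at `t` lying above `ψ(0) = 0` gives `0 ≤ g ≤ 1`. So for every single `a > 1`,
`ψ(a t) / ψ(t)` is frequently close to `1` exactly when `g` is frequently close to `0`.
-/

open Filter Set

lemma Filter.liminf_eq_iff_frequently_lt {α : Type*} {l : Filter α} [l.NeBot] {u : α → ℝ} {c : ℝ}
    (hlb : ∀ᶠ x in l, c ≤ u x) (hub : IsBoundedUnder (· ≤ ·) l u) :
    liminf u l = c ↔ ∀ y > c, ∃ᶠ x in l, u x < y := by
  have hcob : IsCoboundedUnder (· ≥ ·) l u := hub.isCoboundedUnder_ge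
  rw [← liminf_le_iff hcob (isBoundedUnder_of_eventually_ge hlb)]
  exact ⟨le_of_eq, fun h => h.antisymm (le_liminf_of_le hcob hlb)⟩

namespace ConcaveOn

variable {f : ℝ → ℝ}

lemma pos_of_tendsto_atTop (hf : ConcaveOn ℝ (Ici 0) f) (h0 : f 0 = 0)
    (htop : Tendsto f atTop atTop) {t : ℝ} (ht : 0 < t) : 0 < f t := by
  obtain ⟨T, hfT, htT⟩ :=
    ((htop.eventually_gt_atTop 0).and (eventually_ge_atTop t)).exists
  have hT : 0 < T := ht.trans_le htT
  have hslope : slope f 0 T ≤ slope f 0 t :=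
    hf.slope_anti self_mem_Ici ⟨mem_Ici.2 ht.le, ht.ne'⟩ ⟨mem_Ici.2 hT.le, hT.ne'⟩ htT
  simp only [slope_def_field, h0, sub_zero] at hslope
  exact (div_pos_iff_of_pos_right ht).1 ((div_pos hfT hT).trans_le hslope)

lemma mul_le_of_hasDerivAt (hf : ConcaveOn ℝ (Ici 0) f) (h0 : f 0 = 0) {t d : ℝ}
    (ht : 0 < t) (hd : HasDerivAt f d t) : t * d ≤ f t := by
  have hchord := hf.le_slope_of_hasDerivAt self_mem_Ici (mem_Ici.2 ht.le) ht hd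
  rw [slope_def_field, h0, sub_zero, sub_zero, le_div_iff₀ ht] at hchord
  linarith

variable {s : Set ℝ} {a t d : ℝ}

lemma div_le_one_add_of_hasDerivAt (hf : ConcaveOn ℝ s f) (hts : t ∈ s) (hats : a * t ∈ s)
    (ht : 0 < t) (ha : 1 < a) (hd : HasDerivAt f d t) (hft : 0 < f t) :
    f (a * t) / f t ≤ 1 + (a - 1) * (t * d / f t) := by
  have hlt : t < a * t := by nlinarith
  have hchord := hf.slope_le_of_hasDerivAt hts hats hlt hd
  rw [slope_def_field, div_le_iff₀ (by linarith)] at hchord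
  rw [div_le_iff₀ hft]
  field_simp
  nlinarith

lemma one_add_le_div_of_hasDerivAt (hf : ConcaveOn ℝ s f) (hts : t ∈ s) (hats : a * t ∈ s)
    (ht : 0 < t) (ha : 1 < a) (hd : HasDerivAt f d (a * t)) (hd0 : 0 ≤ d) (hft : 0 < f t)
    (hle : f t ≤ f (a * t)) :
    1 + (a - 1) / a * (a * t * d / f (a * t)) ≤ f (a * t) / f t := by
  have hlt : t < a * t := by nlinarith
  have hchord := hf.le_slope_of_hasDerivAt hts hats hlt hd
  rw [slope_def_field, le_div_iff₀ (by linarith)] at hchord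
  have hnum : 0 ≤ (a - 1) * t * d := mul_nonneg (mul_nonneg (sub_nonneg.2 ha.le) ht.le) hd0
  calc 1 + (a - 1) / a * (a * t * d / f (a * t))
      = 1 + (a - 1) * t * d / f (a * t) := by field_simp
    _ ≤ 1 + (a - 1) * t * d / f t := by gcongr
    _ ≤ f (a * t) / f t := by
      rw [← le_sub_iff_add_le', div_sub_one hft.ne', div_le_div_iff_of_pos_right hft]
      linarith

end ConcaveOn

lemma liminf_eq_one_iff_liminf_eq_zero_of_sandwich {r g : ℝ → ℝ} {a : ℝ} (ha : 1 < a)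
    (hg_nonneg : ∀ᶠ t in atTop, 0 ≤ g t) (hg_le_one : ∀ᶠ t in atTop, g t ≤ 1)
    (hupper : ∀ᶠ t in atTop, r t ≤ 1 + (a - 1) * g t)
    (hlower : ∀ᶠ t in atTop, 1 + (a - 1) / a * g (a * t) ≤ r t) :
    liminf r atTop = 1 ↔ liminf g atTop = 0 := by
  have ha0 : 0 < a := one_pos.trans ha
  have hc : 0 < (a - 1) / a := div_pos (by linarith) ha0
  have hr_ge : ∀ᶠ t in atTop, 1 ≤ r t := by
    filter_upwards [hlower, (tendsto_id.const_mul_atTop ha0).eventually hg_nonneg] with t h hg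
    have : 0 ≤ (a - 1) / a * g (a * t) := mul_nonneg hc.le hg
    linarith
  have hr_le : ∀ᶠ t in atTop, r t ≤ a := by
    filter_upwards [hupper, hg_le_one] with t h hg
    nlinarith
  rw [liminf_eq_iff_frequently_lt hr_ge (isBoundedUnder_of_eventually_le hr_le),
    liminf_eq_iff_frequently_lt hg_nonneg (isBoundedUnder_of_eventually_le hg_le_one)]
  constructor
  · intro h ε hε
    have hfreq : ∃ᶠ t in atTop, g (a * t) < ε := by
      refine (h (1 + (a - 1) / a * ε) (by nlinarith)).mp (hlower.mono fun t hl hr => ?_)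
      exact lt_of_mul_lt_mul_left (by linarith) hc.le
    exact (tendsto_id.const_mul_atTop ha0).frequently hfreq
  · intro h y hy
    refine (h ((y - 1) / (a - 1)) (div_pos (by linarith) (by linarith))).mp
      (hupper.mono fun t hu hg => hu.trans_lt ?_)
    rw [lt_div_iff₀ (by linarith)] at hg
    linarith

lemma liminf_div_eq_one_iff_liminf_mul_deriv_div_eq_zero {ψ ψ' : ℝ → ℝ}
    (hmono : MonotoneOn ψ (Ici 0)) (hconc : ConcaveOn ℝ (Ici 0) ψ) (hzero : ψ 0 = 0)
    (htop : Tendsto ψ atTop atTop) (hderiv : ∀ t ∈ Ioi (0 : ℝ), HasDerivAt ψ (ψ' t) t)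
    {a : ℝ} (ha : 1 < a) :
    liminf (fun t => ψ (a * t) / ψ t) atTop = 1 ↔ liminf (fun t => t * ψ' t / ψ t) atTop = 0 := by
  have hpos : ∀ t > 0, 0 < ψ t := fun t ht => hconc.pos_of_tendsto_atTop hzero htop ht
  have hderiv_nonneg : ∀ t > 0, 0 ≤ ψ' t := fun t ht =>
    (hmono.slope_nonneg (mem_Ici.2 ht.le) (mem_Ici.2 (by linarith))).trans
      (hconc.slope_le_of_hasDerivAt (mem_Ici.2 ht.le) (mem_Ici.2 (by linarith))
        (lt_add_one t) (hderiv t ht))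
  apply liminf_eq_one_iff_liminf_eq_zero_of_sandwich ha
  · filter_upwards [eventually_gt_atTop 0] with t ht
    exact div_nonneg (mul_nonneg ht.le (hderiv_nonneg t ht)) (hpos t ht).le
  · filter_upwards [eventually_gt_atTop 0] with t ht
    exact (div_le_one (hpos t ht)).2 (hconc.mul_le_of_hasDerivAt hzero ht (hderiv t ht))
  · filter_upwards [eventually_gt_atTop 0] with t ht
    exact hconc.div_le_one_add_of_hasDerivAt (mem_Ici.2 ht.le) (mem_Ici.2 (by positivity)) ht ha
      (hderiv t ht) (hpos t ht)
  · filter_upwards [eventually_gt_atTop 0] with t ht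
    have hat : 0 < a * t := by positivity
    exact hconc.one_add_le_div_of_hasDerivAt (mem_Ici.2 ht.le) (mem_Ici.2 hat.le) ht ha
      (hderiv _ hat) (hderiv_nonneg _ hat) (hpos t ht)
      (hmono (mem_Ici.2 ht.le) (mem_Ici.2 hat.le) (by nlinarith))

theorem stmt4_general
    (ψ ψ' : ℝ → ℝ)
    (hmono : MonotoneOn ψ (Set.Ici 0))
    (hconc : ConcaveOn ℝ (Set.Ici 0) ψ)
    (hzero : ψ 0 = 0)
    (htop : Tendsto ψ atTop atTop)
    (hderiv : ∀ t ∈ Set.Ioi (0:ℝ), HasDerivAt ψ (ψ' t) t) :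
    ((∃ a > (1:ℝ), Filter.liminf (fun t => ψ (a * t) / ψ t) atTop = 1) ↔
      (∀ a > (1:ℝ), Filter.liminf (fun t => ψ (a * t) / ψ t) atTop = 1))
    ∧
    ((∃ a > (1:ℝ), Filter.liminf (fun t => ψ (a * t) / ψ t) atTop = 1) ↔
      Filter.liminf (fun t => t * ψ' t / ψ t) atTop = 0) := by
  have key := fun a (ha : 1 < a) =>
    liminf_div_eq_one_iff_liminf_mul_deriv_div_eq_zero hmono hconc hzero htop hderiv ha
  have hexists : (∃ a > (1:ℝ), liminf (fun t => ψ (a * t) / ψ t) atTop = 1) ↔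
      liminf (fun t => t * ψ' t / ψ t) atTop = 0 :=
    ⟨fun ⟨a, ha, h⟩ => (key a ha).1 h, fun h => ⟨2, one_lt_two, (key 2 one_lt_two).2 h⟩⟩
  have hforall : liminf (fun t => t * ψ' t / ψ t) atTop = 0 ↔
      ∀ a > (1:ℝ), liminf (fun t => ψ (a * t) / ψ t) atTop = 1 :=
    ⟨fun h a ha => (key a ha).2 h, fun h => (key 2 one_lt_two).1 (h 2 one_lt_two)⟩
  exact ⟨hexists.trans hforall, hexists⟩

/-- For `ψ ∈ Ω` continuously differentiable on `(0,∞)` with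
`ψ t = ∫₀^t ψ'`, the conditions (i) `liminf ψ(at)/ψ(t) = 1` for some `a > 1`,
(ii) for every `a > 1`, and (iii) `liminf t ψ'(t)/ψ(t) = 0` are equivalent. -/
theorem stmt4
    (ψ ψ' : ℝ → ℝ)
    (hmono : MonotoneOn ψ (Set.Ici 0))
    (hconc : ConcaveOn ℝ (Set.Ici 0) ψ)
    (hzero : ψ 0 = 0)
    (hnonneg : ∀ t ≥ (0:ℝ), 0 ≤ ψ t)
    (htop : Tendsto ψ atTop atTop)
    (hderiv : ∀ t ∈ Set.Ioi (0:ℝ), HasDerivAt ψ (ψ' t) t)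
    (hcont : ContinuousOn ψ' (Set.Ioi 0))
    (hfund : ∀ t ≥ (0:ℝ), ψ t = ∫ s in (0:ℝ)..t, ψ' s) :
    ((∃ a > (1:ℝ), Filter.liminf (fun t => ψ (a * t) / ψ t) atTop = 1) ↔
      (∀ a > (1:ℝ), Filter.liminf (fun t => ψ (a * t) / ψ t) atTop = 1))
    ∧
    ((∃ a > (1:ℝ), Filter.liminf (fun t => ψ (a * t) / ψ t) atTop = 1) ↔
      Filter.liminf (fun t => t * ψ' t / ψ t) atTop = 0) :=
  stmt4_general ψ ψ' hmono hconc hzero htop hderiv
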